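/- arXiv:math/0511496 — 5 statements merged into one kernel-verified Lean document; each statement's English description precedes it below -/
import Mathlib

section
/- Let P be a compact convex set in ℝ² with nonempty interior, S an interior point of P, and q a line. Then there exists a unique nonnegative real number c (the correcting factor) such that q is a supporting line of H_{S,c}(P), i.e., q meets H_{S,c}(P) but H_{S,c}(P) lies entirely in one closed halfplane determined by q; if S ∈ q we set c = 0 and q passes through H_{S,0}(P) = {S}. -/
def homothetyImage (S : EuclideanSpace ℝ (Fin 2)) (c : ℝ)
    (P : Set (EuclideanSpace ℝ (Fin 2))) : Set (EuclideanSpace ℝ (Fin 2)) :=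
  (fun X => S + c • (X - S)) '' P

def IsLine (L : Set (EuclideanSpace ℝ (Fin 2))) : Prop :=
  ∃ (f : EuclideanSpace ℝ (Fin 2) →L[ℝ] ℝ) (a : ℝ), f ≠ 0 ∧ L = {x | f x = a}

/-- `L` is a supporting line of `K`: it meets `K` and `K` lies in one of the
closed halfplanes bounded by `L`. -/
def IsSupportLine (L K : Set (EuclideanSpace ℝ (Fin 2))) : Prop :=
  (L ∩ K).Nonempty ∧
  ∃ (f : EuclideanSpace ℝ (Fin 2) →L[ℝ] ℝ) (a : ℝ), f ≠ 0 ∧ L = {x | f x = a} ∧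
    ((∀ x ∈ K, f x ≤ a) ∨ (∀ x ∈ K, a ≤ f x))

set_option maxHeartbeats 1000000

theorem correcting_factor_exists_unique
    (P : Set (EuclideanSpace ℝ (Fin 2))) (S : EuclideanSpace ℝ (Fin 2))
    (hcpt : IsCompact P) (hconv : Convex ℝ P) (hS : S ∈ interior P)
    (q : Set (EuclideanSpace ℝ (Fin 2))) (hq : IsLine q) :
    (∃! c : ℝ, 0 ≤ c ∧ IsSupportLine q (homothetyImage S c P)) ∧
    (S ∈ q → (0 ≤ (0:ℝ) ∧ IsSupportLine q (homothetyImage S 0 P)) ∧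
      homothetyImage S 0 P = {S}) := by
  obtain ⟨f, a, hf, hqe⟩ := hq
  set d := f S with hd
  have hSP : S ∈ P := interior_subset hS
  obtain ⟨Xmax, hXmaxP, hmax⟩ := hcpt.exists_isMaxOn ⟨S, hSP⟩ f.continuous.continuousOn
  obtain ⟨Xmin, hXminP, hmin⟩ := hcpt.exists_isMinOn ⟨S, hSP⟩ f.continuous.continuousOn
  set M := f Xmax - d with hM
  set m := f Xmin - d with hm
  obtain ⟨v0, hv0⟩ : ∃ v, f v ≠ 0 := by
    by_contra h; push_neg at h; exact hf (by ext x; simp [h x])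
  obtain ⟨v, hv⟩ : ∃ v, 0 < f v := by
    rcases hv0.lt_or_gt with h | h
    · exact ⟨-v0, by simpa using h⟩
    · exact ⟨v0, h⟩
  have hvne : v ≠ 0 := fun h => by simp [h] at hv
  have hvnorm : 0 < ‖v‖ := norm_pos_iff.mpr hvne
  obtain ⟨ε, hε, hball⟩ := Metric.isOpen_iff.mp isOpen_interior S hS
  set t0 : ℝ := ε / (2 * ‖v‖) with ht0
  have ht0pos : 0 < t0 := by positivity
  have hmemP : ∀ s : ℝ, |s| ≤ t0 → S + s • v ∈ P := by
    intro s hs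
    refine interior_subset (hball ?_)
    rw [Metric.mem_ball, dist_eq_norm]
    have h1 : ‖S + s • v - S‖ = |s| * ‖v‖ := by
      rw [add_sub_cancel_left, norm_smul, Real.norm_eq_abs]
    rw [h1]
    have h2 : |s| * ‖v‖ ≤ t0 * ‖v‖ := by
      exact mul_le_mul_of_nonneg_right hs (le_of_lt hvnorm)
    have h3 : t0 * ‖v‖ = ε / 2 := by
      rw [ht0]; field_simp
    linarith
  have hfvadd : ∀ s : ℝ, f (S + s • v) = d + s * f v := by
    intro s; rw [map_add, map_smul, smul_eq_mul, hd]
  have hMpos : 0 < M := by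
    have h1 : S + t0 • v ∈ P := hmemP t0 (by rw [abs_of_pos ht0pos])
    have h2 : f (S + t0 • v) ≤ f Xmax := hmax h1
    rw [hfvadd] at h2
    have := mul_pos ht0pos hv
    rw [hM]; linarith
  have hmneg : m < 0 := by
    have h1 : S + (-t0) • v ∈ P := hmemP (-t0) (by rw [abs_neg, abs_of_pos ht0pos])
    have h2 : f Xmin ≤ f (S + (-t0) • v) := hmin h1
    rw [hfvadd] at h2
    have := mul_pos ht0pos hv
    rw [hm]; nlinarith
  have hfval : ∀ (c : ℝ) (X : EuclideanSpace ℝ (Fin 2)),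
      f (S + c • (X - S)) = d + c * (f X - d) := by
    intro c X
    have h0 : f (S + c • (X - S)) = f S + c * (f X - f S) := by
      rw [map_add, map_smul, map_sub, smul_eq_mul]
    rw [h0, hd]
  have hchar : ∀ c : ℝ, 0 ≤ c →
      (IsSupportLine q (homothetyImage S c P) ↔ (a = d + c * m ∨ a = d + c * M)) := by
    intro c hc
    constructor
    · rintro ⟨⟨z, hzq, hzK⟩, g, b, hg, hqg, hside⟩
      obtain ⟨Z, hZ, rfl⟩ := hzK
      have hza : f (S + c • (Z - S)) = a := by rw [hqe] at hzq; exact hzq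
      rw [hfval] at hza
      have hZm : m ≤ f Z - d := by
        have h' : f Xmin ≤ f Z := hmin hZ
        rw [hm]; linarith
      have hZM : f Z - d ≤ M := by
        have h' : f Z ≤ f Xmax := hmax hZ
        rw [hM]; linarith
      have h1 : d + c * m ≤ a := by nlinarith
      have h2 : a ≤ d + c * M := by nlinarith
      by_contra hcon
      push_neg at hcon
      obtain ⟨h1', h2'⟩ := hcon
      have hl : d + c * m < a := lt_of_le_of_ne h1 (fun h => h1' h.symm)
      have hr : a < d + c * M := lt_of_le_of_ne h2 h2'
      set x := S + c • (Xmin - S) with hx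
      set y := S + c • (Xmax - S) with hy
      have hxK : x ∈ homothetyImage S c P := ⟨Xmin, hXminP, rfl⟩
      have hyK : y ∈ homothetyImage S c P := ⟨Xmax, hXmaxP, rfl⟩
      have hfx : f x = d + c * m := by rw [hx, hfval, hm]
      have hfy : f y = d + c * M := by rw [hy, hfval, hM]
      set t : ℝ := (a - f x) / (f y - f x) with ht
      have hden : 0 < f y - f x := by rw [hfx, hfy]; linarith
      have ht1 : 0 < t := by apply div_pos; rw [hfx]; linarith; exact hden
      have ht2 : t < 1 := by
        rw [ht, div_lt_one hden]; rw [hfx, hfy]; linarith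
      have hwP : ((1 - t) • Xmin + t • Xmax) ∈ P :=
        hconv hXminP hXmaxP (by linarith) (by linarith) (by ring)
      set w := (1 - t) • x + t • y with hw
      have hwK : w ∈ homothetyImage S c P := by
        refine ⟨(1 - t) • Xmin + t • Xmax, hwP, ?_⟩
        rw [hw, hx, hy]; module
      have hfw : f w = a := by
        rw [hw, map_add, map_smul, map_smul, smul_eq_mul, smul_eq_mul, ht]
        field_simp
        ring
      have hwq : w ∈ q := by rw [hqe]; exact hfw
      have hgw : g w = b := by rw [hqg] at hwq; exact hwq
      have hgx : g x ≠ b := by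
        intro h
        have hxq : x ∈ q := by rw [hqg]; exact h
        rw [hqe] at hxq
        simp only [Set.mem_setOf_eq] at hxq
        rw [hfx] at hxq; linarith
      have hgy : g y ≠ b := by
        intro h
        have hyq : y ∈ q := by rw [hqg]; exact h
        rw [hqe] at hyq
        simp only [Set.mem_setOf_eq] at hyq
        rw [hfy] at hyq; linarith
      have hgwc : g w = (1 - t) * g x + t * g y := by
        rw [hw, map_add, map_smul, map_smul, smul_eq_mul, smul_eq_mul]
      rcases hside with hs | hs
      · have hx1 : g x < b := lt_of_le_of_ne (hs x hxK) hgx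
        have hy1 : g y < b := lt_of_le_of_ne (hs y hyK) hgy
        have e1 : (1 - t) * g x < (1 - t) * b :=
          mul_lt_mul_of_pos_left hx1 (by linarith)
        have e2 : t * g y < t * b := mul_lt_mul_of_pos_left hy1 ht1
        have : g w < b := by rw [hgwc]; nlinarith
        rw [hgw] at this; exact lt_irrefl b this
      · have hx1 : b < g x := lt_of_le_of_ne (hs x hxK) (Ne.symm hgx)
        have hy1 : b < g y := lt_of_le_of_ne (hs y hyK) (Ne.symm hgy)
        have e1 : (1 - t) * b < (1 - t) * g x :=
          mul_lt_mul_of_pos_left hx1 (by linarith)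
        have e2 : t * b < t * g y := mul_lt_mul_of_pos_left hy1 ht1
        have : b < g w := by rw [hgwc]; nlinarith
        rw [hgw] at this; exact lt_irrefl b this
    · rintro (h | h)
      · refine ⟨⟨S + c • (Xmin - S), ?_, ⟨Xmin, hXminP, rfl⟩⟩, f, a, hf, hqe, Or.inr ?_⟩
        · have hz : f (S + c • (Xmin - S)) = a := by rw [hfval, ← hm, ← h]
          rw [hqe]; exact hz
        · rintro x ⟨X, hX, rfl⟩
          show a ≤ f (S + c • (X - S))
          rw [hfval, h]
          have h1 : f Xmin ≤ f X := hmin hX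
          have h2 : m ≤ f X - d := by rw [hm]; linarith
          nlinarith
      · refine ⟨⟨S + c • (Xmax - S), ?_, ⟨Xmax, hXmaxP, rfl⟩⟩, f, a, hf, hqe, Or.inl ?_⟩
        · have hz : f (S + c • (Xmax - S)) = a := by rw [hfval, ← hM, ← h]
          rw [hqe]; exact hz
        · rintro x ⟨X, hX, rfl⟩
          show f (S + c • (X - S)) ≤ a
          rw [hfval, h]
          have h1 : f X ≤ f Xmax := hmax hX
          have h2 : f X - d ≤ M := by rw [hM]; linarith
          nlinarith
  constructor
  · rcases lt_trichotomy a d with hlt | heq | hgt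
    · refine ⟨(a - d) / m, ⟨?_, (hchar _ ?_).mpr (Or.inl ?_)⟩, ?_⟩
      · rw [div_nonneg_iff]; right; constructor <;> linarith
      · rw [div_nonneg_iff]; right; constructor <;> linarith
      · rw [div_mul_cancel₀ _ (ne_of_lt hmneg)]; ring
      · rintro c' ⟨hc', hsup⟩
        rcases (hchar c' hc').mp hsup with h | h
        · rw [eq_div_iff (ne_of_lt hmneg)]; linarith
        · exfalso; nlinarith
    · refine ⟨0, ⟨le_rfl, (hchar 0 le_rfl).mpr (Or.inl (by rw [heq]; ring))⟩, ?_⟩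
      rintro c' ⟨hc', hsup⟩
      have hmne : m ≠ 0 := ne_of_lt hmneg
      have hMne : M ≠ 0 := ne_of_gt hMpos
      rcases (hchar c' hc').mp hsup with h | h
      · have h0 : c' * m = 0 := by linarith
        rcases mul_eq_zero.mp h0 with h' | h'
        · exact h'
        · exact absurd h' hmne
      · have h0 : c' * M = 0 := by linarith
        rcases mul_eq_zero.mp h0 with h' | h'
        · exact h'
        · exact absurd h' hMne
    · refine ⟨(a - d) / M, ⟨?_, (hchar _ ?_).mpr (Or.inr ?_)⟩, ?_⟩
      · exact div_nonneg (by linarith) hMpos.le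
      · exact div_nonneg (by linarith) hMpos.le
      · rw [div_mul_cancel₀ _ (ne_of_gt hMpos)]; ring
      · rintro c' ⟨hc', hsup⟩
        rcases (hchar c' hc').mp hsup with h | h
        · exfalso; nlinarith
        · rw [eq_div_iff (ne_of_gt hMpos)]; linarith
  · intro hSq
    have hda : d = a := by rw [hqe] at hSq; exact hSq
    refine ⟨⟨le_rfl, (hchar 0 le_rfl).mpr (Or.inl (by rw [← hda]; ring))⟩, ?_⟩
    apply Set.eq_singleton_iff_unique_mem.mpr
    constructor
    · exact ⟨S, hSP, by simp⟩
    · rintro x ⟨X, hX, rfl⟩; simp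
end

section
/- Fix a compact convex set P ⊆ ℝ², S ∈ interior(P), and a direction vector v ≠ 0. For t ∈ ℝ, let q_t be the line through S + t·n (n a unit normal to v) with direction v, and let c(t) be the correcting factor of P with respect to q_t. Then c is a continuous, piecewise linear function of t, with c(0) = 0, c(t) = t/a for t ≥ 0 and c(t) = -t/b for t ≤ 0, where a = sup{⟨X - S, n⟩ : X ∈ P} and b = sup{⟨S - X, n⟩ : X ∈ P}; in particular c is V-shaped (convex, vanishing only at t = 0). -/
/-!
The line `q t` is the level set `⟪x, n⟫ = ⟪S, n⟫ + t` (here `v ⊥ n` and the plane is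
two-dimensional), and a level set of `⟪·, n⟫` supports a set `K` iff it meets `K` and `K` lies
on one side of it. Since `⟪S + c • (X - S), n⟫ = ⟪S, n⟫ + c * ⟪X - S, n⟫`, the line `q t`
supports `H_{S,c}(P)` iff `t` is the largest or the smallest value of `c * ⟪X - S, n⟫` on `P`,
that is `t = c * a` or `t = -(c * b)`. As `S` is interior, `a, b > 0`, so together with
`c ≥ 0` this pins down `c t = max (t / a) (-t / b)`.
-/

open scoped RealInnerProductSpace
open Set Filter Topology Module

local notation "ℝ²" => EuclideanSpace ℝ (Fin 2)

theorem LinearMap.exists_eq_smul_of_ker_le {𝕜 E : Type*} [Field 𝕜] [AddCommGroup E]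
    [Module 𝕜 E] {f g : E →ₗ[𝕜] 𝕜} (h : ker g ≤ ker f) : ∃ l : 𝕜, f = l • g := by
  have hf := mem_span_of_iInf_ker_le_ker (L := fun _ : Unit => g) (K := f) (by simpa using h)
  rw [Set.range_const] at hf
  obtain ⟨l, hl⟩ := Submodule.mem_span_singleton.1 hf
  exact ⟨l, hl.symm⟩

section InnerProductSpace

variable {E : Type*} [NormedAddCommGroup E] [InnerProductSpace ℝ E]

theorem span_singleton_eq_orthogonal_of_finrank_eq_two (hE : finrank ℝ E = 2) {v n : E}
    (hv : v ≠ 0) (hn : n ≠ 0) (hvn : ⟪v, n⟫ = 0) : ℝ ∙ v = (ℝ ∙ n)ᗮ := by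
  have : FiniteDimensional ℝ E := Module.finite_of_finrank_eq_succ hE
  refine Submodule.eq_of_le_of_finrank_eq ?_ ?_
  · rwa [Submodule.span_singleton_le_iff_mem, Submodule.mem_orthogonal_singleton_iff_inner_left]
  · have := (ℝ ∙ n).finrank_add_finrank_orthogonal
    rw [finrank_span_singleton hn, hE] at this
    rw [finrank_span_singleton hv]
    omega

theorem setOf_exists_eq_add_smul_eq_setOf_inner_eq (hE : finrank ℝ E = 2) {v n : E}
    (hv : v ≠ 0) (hn : n ≠ 0) (hvn : ⟪v, n⟫ = 0) (p : E) :
    {x | ∃ s : ℝ, x = p + s • v} = {x | ⟪x, n⟫ = ⟪p, n⟫} := by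
  ext x
  have hmem := (Submodule.ext_iff.1
    (span_singleton_eq_orthogonal_of_finrank_eq_two hE hv hn hvn)) (x - p)
  rw [Submodule.mem_span_singleton, Submodule.mem_orthogonal_singleton_iff_inner_left,
    inner_sub_left, sub_eq_zero] at hmem
  simp only [mem_ofPred_eq, ← hmem, eq_sub_iff_add_eq', eq_comm (a := x)]

theorem isGreatest_sSup_image_inner_sub {P : Set E} (hP : IsCompact P) (hne : P.Nonempty)
    (S n : E) : IsGreatest ((fun X => ⟪X - S, n⟫) '' P) (sSup ((fun X => ⟪X - S, n⟫) '' P)) :=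
  (hP.image (by fun_prop)).isGreatest_sSup (hne.image _)

theorem sSup_image_inner_sub_pos {P : Set E} (hP : IsCompact P) {S : E} (hS : S ∈ interior P)
    {n : E} (hn : n ≠ 0) : 0 < sSup ((fun X => ⟪X - S, n⟫) '' P) := by
  have hline : Tendsto (fun r : ℝ => S + r • n) (𝓝[>] 0) (𝓝 S) := by
    have : Continuous fun r : ℝ => S + r • n := by fun_prop
    simpa using this.continuousWithinAt (s := Ioi 0) (x := 0) |>.tendsto
  obtain ⟨r, hrP, hr⟩ :=
    ((hline.eventually (mem_interior_iff_mem_nhds.1 hS)).and self_mem_nhdsWithin).exists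
  calc 0 < r * ‖n‖ ^ 2 := mul_pos hr (by positivity)
    _ = ⟪(S + r • n) - S, n⟫ := by
      rw [add_sub_cancel_left, real_inner_smul_left, real_inner_self_eq_norm_sq]
    _ ≤ _ := le_csSup (hP.image (by fun_prop)).bddAbove ⟨_, hrP, rfl⟩

end InnerProductSpace

theorem isSupportLine_setOf_inner_iff {n : ℝ²} (hn : n ≠ 0) {β : ℝ} {K : Set ℝ²} :
    IsSupportLine {x | ⟪x, n⟫ = β} K ↔
      (∃ x ∈ K, ⟪x, n⟫ = β) ∧ ((∀ x ∈ K, ⟪x, n⟫ ≤ β) ∨ ∀ x ∈ K, β ≤ ⟪x, n⟫) := by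
  constructor
  · rintro ⟨⟨x₀, hx₀L, hx₀K⟩, f, α, hf0, hL, hside⟩
    have hlevel (x : ℝ²) : f x = α ↔ ⟪x, n⟫ = β := (Set.ext_iff.1 hL x).symm
    have hx₀ : f x₀ = α := (hlevel x₀).2 hx₀L
    obtain ⟨l, hl⟩ : ∃ l : ℝ, (f : ℝ² →ₗ[ℝ] ℝ) = l • (innerSL ℝ n : ℝ² →ₗ[ℝ] ℝ) := by
      refine LinearMap.exists_eq_smul_of_ker_le fun y hy => ?_
      have hyn : ⟪y, n⟫ = 0 := by simpa [real_inner_comm] using hy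
      have := (hlevel (x₀ + y)).2 (by rw [inner_add_left, hyn, add_zero]; exact hx₀L)
      simpa [hx₀] using this
    have hf (x : ℝ²) : f x = l * ⟪x, n⟫ := by
      simpa [real_inner_comm] using LinearMap.congr_fun hl x
    have hl0 : l ≠ 0 := by
      rintro rfl
      exact hf0 (ContinuousLinearMap.ext fun x => by simpa using hf x)
    have hα : α = l * β := by rw [← hx₀, hf, hx₀L]
    refine ⟨⟨x₀, hx₀K, hx₀L⟩, ?_⟩
    simp only [hf, hα] at hside
    rcases hl0.lt_or_gt with hl | hl
    · simpa only [mul_le_mul_left_of_neg hl, or_comm] using hside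
    · simpa only [mul_le_mul_iff_of_pos_left hl] using hside
  · rintro ⟨hmem, hside⟩
    refine ⟨by simpa [Set.Nonempty, and_comm] using hmem, innerSL ℝ n, β, ?_, ?_, ?_⟩
    · rwa [← norm_ne_zero_iff, innerSL_apply_norm, norm_ne_zero_iff]
    · simp [real_inner_comm]
    · simpa [real_inner_comm] using hside

theorem isSupportLine_homothetyImage_iff {S n : ℝ²} (hn : ‖n‖ = 1) {c t : ℝ} {P : Set ℝ²} :
    IsSupportLine {x | ⟪x, n⟫ = ⟪S + t • n, n⟫} (homothetyImage S c P) ↔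
      (∃ X ∈ P, c * ⟪X - S, n⟫ = t) ∧
        ((∀ X ∈ P, c * ⟪X - S, n⟫ ≤ t) ∨ ∀ X ∈ P, t ≤ c * ⟪X - S, n⟫) := by
  rw [isSupportLine_setOf_inner_iff (norm_ne_zero_iff.1 (by rw [hn]; exact one_ne_zero))]
  simp only [homothetyImage, exists_mem_image, forall_mem_image, inner_add_left,
    real_inner_smul_left, real_inner_self_eq_norm_sq, hn, one_pow, mul_one, add_right_inj,
    add_le_add_iff_left]

theorem eq_mul_or_eq_neg_mul_of_isGreatest {ι : Type*} {P : Set ι} {φ : ι → ℝ} {a b c t : ℝ}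
    (ha : IsGreatest (φ '' P) a) (hb : IsGreatest ((fun X => -φ X) '' P) b) (hc : 0 ≤ c)
    (hmem : ∃ X ∈ P, c * φ X = t)
    (hside : (∀ X ∈ P, c * φ X ≤ t) ∨ ∀ X ∈ P, t ≤ c * φ X) :
    t = c * a ∨ t = -(c * b) := by
  obtain ⟨X₀, hX₀, rfl⟩ := hmem
  obtain ⟨⟨Xa, hXa, rfl⟩, ha⟩ := ha
  obtain ⟨⟨Xb, hXb, rfl⟩, hb⟩ := hb
  rcases hside with h | h
  · exact .inl (le_antisymm (mul_le_mul_of_nonneg_left (ha ⟨X₀, hX₀, rfl⟩) hc) (h Xa hXa))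
  · have := mul_le_mul_of_nonneg_left (hb ⟨X₀, hX₀, rfl⟩) hc
    exact .inr (by linarith [h Xb hXb])

section VShape

variable {a b : ℝ}

theorem eq_max_div_of_eq_mul_or_eq_neg_mul (ha : 0 < a) (hb : 0 < b) {c t : ℝ} (hc : 0 ≤ c)
    (h : t = c * a ∨ t = -(c * b)) : c = max (t / a) (-t / b) := by
  rcases h with rfl | rfl
  · rw [mul_div_cancel_right₀ _ ha.ne', max_eq_left]
    exact (div_nonpos_of_nonpos_of_nonneg (by nlinarith) hb.le).trans hc
  · rw [neg_neg, mul_div_cancel_right₀ _ hb.ne', max_eq_right]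
    exact (div_nonpos_of_nonpos_of_nonneg (by nlinarith) ha.le).trans hc

theorem max_div_neg_div_of_nonneg (ha : 0 ≤ a) (hb : 0 ≤ b) {t : ℝ} (ht : 0 ≤ t) :
    max (t / a) (-t / b) = t / a :=
  max_eq_left ((div_nonpos_of_nonpos_of_nonneg (neg_nonpos.2 ht) hb).trans (div_nonneg ht ha))

theorem max_div_neg_div_of_nonpos (ha : 0 ≤ a) (hb : 0 ≤ b) {t : ℝ} (ht : t ≤ 0) :
    max (t / a) (-t / b) = -t / b :=
  max_eq_right ((div_nonpos_of_nonpos_of_nonneg ht ha).trans (div_nonneg (neg_nonneg.2 ht) hb))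

theorem max_div_neg_div_eq_zero_iff (ha : 0 < a) (hb : 0 < b) {t : ℝ} :
    max (t / a) (-t / b) = 0 ↔ t = 0 := by
  rcases le_total 0 t with ht | ht
  · simp [max_div_neg_div_of_nonneg ha.le hb.le ht, ha.ne']
  · simp [max_div_neg_div_of_nonpos ha.le hb.le ht, hb.ne']

theorem convexOn_max_div_neg_div (a b : ℝ) : ConvexOn ℝ univ fun t : ℝ => max (t / a) (-t / b) :=
  ((LinearMap.mulRight ℝ a⁻¹).convexOn convex_univ).sup
    (((LinearMap.mulRight ℝ b⁻¹).comp (-LinearMap.id)).convexOn convex_univ)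

end VShape

theorem correcting_factor_V_shaped_general
    (P : Set (EuclideanSpace ℝ (Fin 2))) (S : EuclideanSpace ℝ (Fin 2))
    (hcpt : IsCompact P) (hS : S ∈ interior P)
    (v n : EuclideanSpace ℝ (Fin 2)) (hv : v ≠ 0) (hn : ‖n‖ = 1)
    (horth : (inner ℝ v n : ℝ) = 0)
    -- the family of lines through `S + t • n` with direction `v`:
    (q : ℝ → Set (EuclideanSpace ℝ (Fin 2)))
    (hq : ∀ t : ℝ, q t = {x | ∃ s : ℝ, x = S + t • n + s • v})
    -- `c t` is the correcting factor of `P` with respect to `q t`: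
    (c : ℝ → ℝ)
    (hc : ∀ t : ℝ, 0 ≤ c t ∧ IsSupportLine (q t) (homothetyImage S (c t) P)) :
    Continuous c ∧ c 0 = 0 ∧
    (∀ t : ℝ, 0 ≤ t → c t = t / sSup ((fun X => (inner ℝ (X - S) n : ℝ)) '' P)) ∧
    (∀ t : ℝ, t ≤ 0 → c t = -t / sSup ((fun X => (inner ℝ (S - X) n : ℝ)) '' P)) ∧
    ConvexOn ℝ Set.univ c ∧ (∀ t : ℝ, c t = 0 ↔ t = 0) := by
  have hn0 : n ≠ 0 := norm_ne_zero_iff.1 (by rw [hn]; exact one_ne_zero)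
  have hPne : P.Nonempty := ⟨S, interior_subset hS⟩
  have hb_eq : (fun X => ⟪S - X, n⟫) = fun X => ⟪X - S, -n⟫ := by
    funext X; rw [inner_neg_right, ← inner_neg_left, neg_sub]
  set a := sSup ((fun X => ⟪X - S, n⟫) '' P)
  set b := sSup ((fun X => ⟪S - X, n⟫) '' P)
  have ha := isGreatest_sSup_image_inner_sub hcpt hPne S n
  have hb : IsGreatest ((fun X => -⟪X - S, n⟫) '' P) b := by
    simpa only [b, hb_eq, inner_neg_right] using isGreatest_sSup_image_inner_sub hcpt hPne S (-n)
  have ha0 : 0 < a := sSup_image_inner_sub_pos hcpt hS hn0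
  have hb0 : 0 < b := by
    simpa only [b, hb_eq] using sSup_image_inner_sub_pos hcpt hS (neg_ne_zero.2 hn0)
  obtain rfl : c = fun t => max (t / a) (-t / b) := funext fun t => by
    obtain ⟨hct, hsupp⟩ := hc t
    rw [hq, setOf_exists_eq_add_smul_eq_setOf_inner_eq finrank_euclideanSpace_fin hv hn0 horth,
      isSupportLine_homothetyImage_iff hn] at hsupp
    exact eq_max_div_of_eq_mul_or_eq_neg_mul ha0 hb0 hct
      (eq_mul_or_eq_neg_mul_of_isGreatest ha hb hct hsupp.1 hsupp.2)
  exact ⟨by fun_prop, by simp, fun t => max_div_neg_div_of_nonneg ha0.le hb0.le,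
    fun t => max_div_neg_div_of_nonpos ha0.le hb0.le, convexOn_max_div_neg_div a b,
    fun t => max_div_neg_div_eq_zero_iff ha0 hb0⟩

theorem correcting_factor_V_shaped
    (P : Set (EuclideanSpace ℝ (Fin 2))) (S : EuclideanSpace ℝ (Fin 2))
    (hcpt : IsCompact P) (hconv : Convex ℝ P) (hS : S ∈ interior P)
    (v n : EuclideanSpace ℝ (Fin 2)) (hv : v ≠ 0) (hn : ‖n‖ = 1)
    (horth : (inner ℝ v n : ℝ) = 0)
    -- the family of lines through `S + t • n` with direction `v`:
    (q : ℝ → Set (EuclideanSpace ℝ (Fin 2)))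
    (hq : ∀ t : ℝ, q t = {x | ∃ s : ℝ, x = S + t • n + s • v})
    -- `c t` is the correcting factor of `P` with respect to `q t`:
    (c : ℝ → ℝ)
    (hc : ∀ t : ℝ, 0 ≤ c t ∧ IsSupportLine (q t) (homothetyImage S (c t) P)) :
    Continuous c ∧ c 0 = 0 ∧
    (∀ t : ℝ, 0 ≤ t → c t = t / sSup ((fun X => (inner ℝ (X - S) n : ℝ)) '' P)) ∧
    (∀ t : ℝ, t ≤ 0 → c t = -t / sSup ((fun X => (inner ℝ (S - X) n : ℝ)) '' P)) ∧
    ConvexOn ℝ Set.univ c ∧ (∀ t : ℝ, c t = 0 ↔ t = 0) :=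
  correcting_factor_V_shaped_general P S hcpt hS v n hv hn horth q hq c hc
end

section
/- The correcting factor function t ↦ c(t) defined above satisfies: c(t) < 1 if and only if the line q_t intersects the interior of P, c(t) = 1 if and only if q_t is a supporting line of P, and c(t) > 1 if and only if q_t ∩ P = ∅. -/
/-!
For `0 ≤ c < 1` the homothety of ratio `c` centred at the interior point `S` maps the convex set
`P` into its interior, while for `c > 1` the dilated set contains `P` in its interior. A supporting
line never meets the interior of the set it supports, so `c < 1`, `c = 1` and `c > 1` force
the three mutually exclusive positions of `q_t` relative to `P`.
-/

open Set AffineMap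

theorem Convex.image_homothety_subset_interior_of_lt_one {E : Type*} [AddCommGroup E]
    [Module ℝ E] [TopologicalSpace E] [IsTopologicalAddGroup E] [ContinuousSMul ℝ E]
    {s : Set E} (hs : Convex ℝ s) {x : E} (hx : x ∈ interior s) {c : ℝ} (hc₀ : 0 ≤ c)
    (hc₁ : c < 1) : homothety x c '' s ⊆ interior s := by
  rintro _ ⟨y, hy, rfl⟩
  convert hs.add_smul_sub_mem_interior hy hx (t := 1 - c) ⟨by linarith, by linarith⟩ using 1
  rw [homothety_apply, vsub_eq_sub, vadd_eq_add]
  module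

theorem StrongDual.apply_lt_of_mem_interior {E : Type*} [AddCommGroup E] [Module ℝ E]
    [TopologicalSpace E] [ContinuousAdd E] [ContinuousSMul ℝ E] {f : StrongDual ℝ E} (hf : f ≠ 0)
    {K : Set E} {a : ℝ} (hK : ∀ x ∈ K, f x ≤ a) {x : E} (hx : x ∈ interior K) : f x < a := by
  have hopen : IsOpen (f '' interior K) := f.isOpenMap_of_ne_zero hf _ isOpen_interior
  have hsub : f '' interior K ⊆ Iic a :=
    image_subset_iff.2 fun y hy => hK y (interior_subset hy)
  simpa only [interior_Iic, mem_Iio] using interior_maximal hsub hopen (mem_image_of_mem f hx)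

theorem homothetyImage_eq_image_homothety (S : EuclideanSpace ℝ (Fin 2)) (c : ℝ)
    (P : Set (EuclideanSpace ℝ (Fin 2))) : homothetyImage S c P = homothety S c '' P := by
  unfold homothetyImage
  congr 1
  funext X
  rw [homothety_apply, vsub_eq_sub, vadd_eq_add, add_comm]

theorem homothetyImage_one (S : EuclideanSpace ℝ (Fin 2)) (P : Set (EuclideanSpace ℝ (Fin 2))) :
    homothetyImage S 1 P = P := by
  simp [homothetyImage]

theorem IsSupportLine.inter_interior_eq_empty {L K : Set (EuclideanSpace ℝ (Fin 2))}
    (h : IsSupportLine L K) : L ∩ interior K = ∅ := by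
  obtain ⟨-, f, a, hf, rfl, hK | hK⟩ := h
  · exact eq_empty_of_forall_notMem fun x ⟨hxa, hx⟩ =>
      (StrongDual.apply_lt_of_mem_interior hf hK hx).ne hxa
  · have hK' : ∀ x ∈ K, (-f) x ≤ -a := fun x hx => by simpa using hK x hx
    exact eq_empty_of_forall_notMem fun x ⟨hxa, hx⟩ =>
      (StrongDual.apply_lt_of_mem_interior (neg_ne_zero.2 hf) hK' hx).ne (by simpa using hxa)

theorem correcting_factor_trichotomy_general
    (P : Set (EuclideanSpace ℝ (Fin 2))) (S : EuclideanSpace ℝ (Fin 2))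
    (hconv : Convex ℝ P) (hS : S ∈ interior P)
    (q : ℝ → Set (EuclideanSpace ℝ (Fin 2)))
    (c : ℝ → ℝ)
    (hc : ∀ t : ℝ, 0 ≤ c t ∧ IsSupportLine (q t) (homothetyImage S (c t) P)) :
    ∀ t : ℝ,
      (c t < 1 ↔ (q t ∩ interior P).Nonempty) ∧
      (c t = 1 ↔ IsSupportLine (q t) P) ∧
      (1 < c t ↔ q t ∩ P = ∅) := by
  intro t
  obtain ⟨hc₀, hsupp⟩ := hc t
  have heq : c t = 1 → IsSupportLine (q t) P := fun h => by
    rwa [h, homothetyImage_one] at hsupp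
  rw [homothetyImage_eq_image_homothety] at hsupp
  have hlt : c t < 1 → (q t ∩ interior P).Nonempty := fun h =>
    hsupp.1.mono <| inter_subset_inter_right _ <|
      hconv.image_homothety_subset_interior_of_lt_one hS hc₀ h
  have hgt : 1 < c t → q t ∩ P = ∅ := fun h => subset_empty_iff.1 <|
    hsupp.inter_interior_eq_empty ▸ inter_subset_inter_right _
      (hconv.subset_interior_image_homothety_of_one_lt hS _ h)
  have hsupp_ne : IsSupportLine (q t) P → q t ∩ P ≠ ∅ := fun h => h.1.ne_empty
  have hint_ne : (q t ∩ interior P).Nonempty → q t ∩ P ≠ ∅ := fun h =>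
    (h.mono (inter_subset_inter_right _ interior_subset)).ne_empty
  rcases lt_trichotomy (c t) 1 with h | h | h
  · have hint := hlt h
    exact ⟨iff_of_true h hint, iff_of_false h.ne fun hP => hint.ne_empty hP.inter_interior_eq_empty,
      iff_of_false h.not_gt (hint_ne hint)⟩
  · have hP := heq h
    exact ⟨iff_of_false h.not_lt fun hint => hint.ne_empty hP.inter_interior_eq_empty,
      iff_of_true h hP, iff_of_false h.not_gt (hsupp_ne hP)⟩
  · have hempty := hgt h
    exact ⟨iff_of_false h.not_gt fun hint => hint_ne hint hempty,
      iff_of_false h.ne' fun hP => hsupp_ne hP hempty, iff_of_true h hempty⟩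

theorem correcting_factor_trichotomy
    (P : Set (EuclideanSpace ℝ (Fin 2))) (S : EuclideanSpace ℝ (Fin 2))
    (hcpt : IsCompact P) (hconv : Convex ℝ P) (hS : S ∈ interior P)
    (v n : EuclideanSpace ℝ (Fin 2)) (hv : v ≠ 0) (hn : ‖n‖ = 1)
    (horth : (inner ℝ v n : ℝ) = 0)
    (q : ℝ → Set (EuclideanSpace ℝ (Fin 2)))
    (hq : ∀ t : ℝ, q t = {x | ∃ s : ℝ, x = S + t • n + s • v})
    (c : ℝ → ℝ)
    (hc : ∀ t : ℝ, 0 ≤ c t ∧ IsSupportLine (q t) (homothetyImage S (c t) P)) :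
    ∀ t : ℝ,
      (c t < 1 ↔ (q t ∩ interior P).Nonempty) ∧
      (c t = 1 ↔ IsSupportLine (q t) P) ∧
      (1 < c t ↔ q t ∩ P = ∅) :=
  correcting_factor_trichotomy_general P S hconv hS q c hc
end

section
/- Suppose c = c_m is the minimal expansion ratio (minimal c such that {H_{Sᵢ,c}(Pᵢ)} has a transversal), c_m > 0, and t is a transversal of {H_{Sᵢ,c_m}(Pᵢ)}. Then at least one of the sets H_{Sᵢ,c_m}(Pᵢ) meets t but has interior disjoint from t (i.e., t is a supporting line of that set). -/
lemma interior_homothetyImage (S : EuclideanSpace ℝ (Fin 2)) {c : ℝ} (hc : c ≠ 0)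
    (P : Set (EuclideanSpace ℝ (Fin 2))) :
    interior (homothetyImage S c P) = homothetyImage S c (interior P) := by
  let e : EuclideanSpace ℝ (Fin 2) ≃ₜ EuclideanSpace ℝ (Fin 2) :=
    (Homeomorph.subRight S).trans ((Homeomorph.smulOfNeZero c hc).trans
      (Homeomorph.addLeft S))
  have he : ∀ Q, homothetyImage S c Q = e '' Q := by
    intro Q
    rfl
  rw [he, he, ← Homeomorph.image_interior]

theorem minimal_configuration_has_touching_set {m : ℕ}
    (P : Fin m → Set (EuclideanSpace ℝ (Fin 2)))
    (S : Fin m → EuclideanSpace ℝ (Fin 2))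
    (hcpt : ∀ i, IsCompact (P i)) (hconv : ∀ i, Convex ℝ (P i))
    (hS : ∀ i, S i ∈ interior (P i))
    -- the centers are not collinear:
    (hnc : ¬ ∃ L, IsLine L ∧ ∀ i, S i ∈ L)
    (cm : ℝ) (hcm : 0 < cm)
    -- minimality: no smaller positive ratio admits a transversal:
    (hmin : ∀ c : ℝ, 0 < c → c < cm →
      ¬ ∃ t, IsLine t ∧ ∀ i, (t ∩ homothetyImage (S i) c (P i)).Nonempty)
    -- `t` is a transversal of the family at ratio `cm`:
    (t : Set (EuclideanSpace ℝ (Fin 2))) (ht : IsLine t)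
    (htr : ∀ i, (t ∩ homothetyImage (S i) cm (P i)).Nonempty) :
    ∃ i, (t ∩ homothetyImage (S i) cm (P i)).Nonempty ∧
      t ∩ interior (homothetyImage (S i) cm (P i)) = ∅ := by
  by_contra hcon
  push_neg at hcon
  have hint : ∀ i, (t ∩ interior (homothetyImage (S i) cm (P i))).Nonempty :=
    fun i => hcon i (htr i)
  -- For each i, find a threshold b i < cm such that for all c ∈ (b i, cm),
  -- the line t meets homothetyImage (S i) c (P i).
  have key : ∀ i : Fin m, ∃ b : ℝ, b < cm ∧
      ∀ c : ℝ, c ≠ 0 → b < c → c < cm →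
        (t ∩ homothetyImage (S i) c (P i)).Nonempty := by
    intro i
    obtain ⟨x, hxt, hxint⟩ := hint i
    rw [interior_homothetyImage (S i) hcm.ne' (P i)] at hxint
    obtain ⟨y, hy, hxy⟩ := hxint
    -- define h c := S i + (cm / c) • (y - S i); h cm = y ∈ interior (P i)
    set h : ℝ → EuclideanSpace ℝ (Fin 2) := fun c => S i + (cm / c) • (y - S i) with hh
    have hcont : ContinuousAt h cm := by
      apply ContinuousAt.add continuousAt_const
      exact (continuousAt_const.div continuousAt_id hcm.ne').smul continuousAt_const
    have hhcm : h cm = y := by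
      simp [hh, div_self hcm.ne']
    have hmem : h ⁻¹' interior (P i) ∈ nhds cm := by
      apply hcont.preimage_mem_nhds
      rw [hhcm]
      exact isOpen_interior.mem_nhds hy
    rw [Metric.mem_nhds_iff] at hmem
    obtain ⟨δ, hδpos, hδ⟩ := hmem
    refine ⟨cm - δ, by linarith, fun c hc0 hbc hccm => ?_⟩
    have hc_ball : c ∈ Metric.ball cm δ := by
      rw [Metric.mem_ball, Real.dist_eq, abs_sub_lt_iff]
      constructor <;> linarith
    have hhc : h c ∈ P i := interior_subset (hδ hc_ball)
    refine ⟨x, hxt, h c, hhc, ?_⟩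
    show S i + c • (h c - S i) = x
    rw [hh]
    simp only [add_sub_cancel_left, smul_smul]
    rw [mul_div_cancel₀ cm hc0]
    exact hxy
  choose b hb hbc using key
  -- pick c strictly between all thresholds (and cm/2) and cm
  set T : Finset ℝ := insert (cm / 2) (Finset.image b Finset.univ) with hT
  have hTne : T.Nonempty := ⟨cm / 2, Finset.mem_insert_self _ _⟩
  set c₀ : ℝ := T.max' hTne with hc₀
  have hc₀half : cm / 2 ≤ c₀ := T.le_max' _ (Finset.mem_insert_self _ _)
  have hc₀lt : c₀ < cm := by
    rw [hc₀, Finset.max'_lt_iff]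
    intro x hx
    rw [hT, Finset.mem_insert] at hx
    rcases hx with h1 | h2
    · rw [h1]; linarith
    · obtain ⟨i, _, hi⟩ := Finset.mem_image.1 h2
      rw [← hi]
      exact hb i
  set c : ℝ := (c₀ + cm) / 2 with hcdef
  have hcpos : 0 < c := by
    have : 0 < c₀ := lt_of_lt_of_le (by linarith) hc₀half
    rw [hcdef]; linarith
  have hclt : c < cm := by rw [hcdef]; linarith
  refine hmin c hcpos hclt ⟨t, ht, fun i => ?_⟩
  have hbi : b i ≤ c₀ := T.le_max' _ (Finset.mem_insert_of_mem
    (Finset.mem_image.2 ⟨i, Finset.mem_univ i, rfl⟩))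
  exact hbc i c hcpos.ne' (by rw [hcdef]; linarith) hclt
end

section
/- If S₁,…,Sₙ are points in ℝ² such that they are not all collinear, then there exists c₀ > 0 such that for all 0 < c < c₀ the family {H_{Sᵢ,c}(Pᵢ)} admits no line transversal, where Pᵢ are compact convex sets with Sᵢ ∈ interior(Pᵢ). -/
/-!
If `P ⊆ closedBall S R`, a line `{f = a}` meeting `S + c • (P - S)` satisfies
`|a - f S| ≤ c * ‖f‖ * R`. If it meets all the shrunken sets, then `|f (S i - S j)| ≤ 2 c ‖f‖ R`
for all `i, j`. As the centers are not collinear their differences span the plane, so a linear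
functional is bounded by a constant `K` times its largest value on them; hence
`‖f‖ ≤ 2 K R c ‖f‖`, which forces `f = 0` once `c < 1 / (2 K R)`.
-/

open Set Submodule Metric

theorem exists_opNorm_le_of_span_eq_top {E ι : Type*} [NormedAddCommGroup E] [NormedSpace ℝ E]
    [FiniteDimensional ℝ E] [Fintype ι] {v : ι → E} (hv : span ℝ (range v) = ⊤) :
    ∃ K > 0, ∀ (f : E →L[ℝ] ℝ) (ε : ℝ), 0 ≤ ε → (∀ i, |f (v i)| ≤ ε) → ‖f‖ ≤ K * ε := by
  let φ : (E →L[ℝ] ℝ) →ₗ[ℝ] ι → ℝ :=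
    { toFun := fun f i => f (v i)
      map_add' := fun _ _ => rfl
      map_smul' := fun _ _ => rfl }
  have hker : LinearMap.ker φ = ⊥ :=
    LinearMap.ker_eq_bot'.mpr fun f hf =>
      ContinuousLinearMap.coe_injective (LinearMap.ext_on_range hv fun i => congrFun hf i)
  obtain ⟨K, hK0, hK⟩ := φ.exists_antilipschitzWith hker
  refine ⟨K, hK0, fun f ε hε hf => ?_⟩
  calc ‖f‖ ≤ K * ‖φ f‖ := by simpa using hK.le_mul_dist f 0
    _ ≤ K * ε := by
      gcongr
      exact (pi_norm_le_iff_of_nonneg hε).mpr fun i => (Real.norm_eq_abs _).trans_le (hf i)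

theorem vectorSpan_range_eq_span_range_sub {k V ι : Type*} [Ring k] [AddCommGroup V] [Module k V]
    (S : ι → V) : vectorSpan k (range S) = span k (range fun p : ι × ι => S p.1 - S p.2) := by
  rw [vectorSpan_def]
  congr 1
  ext
  simp [mem_vsub]

theorem exists_isLine_superset_of_vectorSpan_ne_top {s : Set (EuclideanSpace ℝ (Fin 2))}
    (hs : vectorSpan ℝ s ≠ ⊤) : ∃ L, IsLine L ∧ s ⊆ L := by
  obtain ⟨g, hg0, hgs⟩ := (vectorSpan ℝ s).exists_le_ker_of_lt_top hs.lt_top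
  let f := LinearMap.toContinuousLinearMap g
  have hf0 : f ≠ 0 := fun h => hg0 (by ext x; exact congrArg (· x) h)
  rcases s.eq_empty_or_nonempty with rfl | ⟨p, hp⟩
  · exact ⟨_, ⟨f, 0, hf0, rfl⟩, empty_subset _⟩
  refine ⟨_, ⟨f, f p, hf0, rfl⟩, fun x hx => ?_⟩
  have : g (x - p) = 0 := hgs (vsub_mem_vectorSpan ℝ hx hp)
  simpa [f, sub_eq_zero] using this

theorem exists_pos_forall_subset_closedBall {X ι : Type*} [PseudoMetricSpace X] [Finite ι]
    {P : ι → Set X} (hP : ∀ i, Bornology.IsBounded (P i)) (S : ι → X) :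
    ∃ R > 0, ∀ i, P i ⊆ closedBall (S i) R := by
  choose r hr using fun i => (isBounded_iff_subset_closedBall (S i)).mp (hP i)
  obtain ⟨M, hM⟩ := Finite.exists_le r
  exact ⟨max M 1, by positivity, fun i => (hr i).trans (closedBall_subset_closedBall
    ((hM i).trans (le_max_left _ _)))⟩

theorem abs_apply_sub_le_of_mem_homothetyImage {S y : EuclideanSpace ℝ (Fin 2)} {c R : ℝ}
    {P : Set (EuclideanSpace ℝ (Fin 2))} (f : EuclideanSpace ℝ (Fin 2) →L[ℝ] ℝ) (hc : 0 ≤ c)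
    (hP : P ⊆ closedBall S R) (hy : y ∈ homothetyImage S c P) :
    |f y - f S| ≤ c * (‖f‖ * R) := by
  obtain ⟨x, hx, rfl⟩ := hy
  have hxS : ‖x - S‖ ≤ R := by simpa [dist_eq_norm] using hP hx
  calc |f (S + c • (x - S)) - f S| = c * |f (x - S)| := by
        simp [abs_mul, abs_of_nonneg hc]
    _ ≤ c * (‖f‖ * R) := by
        gcongr
        exact (f.le_opNorm _).trans (by gcongr)

theorem no_transversal_for_small_ratio_of_noncollinear_general {m : ℕ}
    (P : Fin m → Set (EuclideanSpace ℝ (Fin 2)))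
    (S : Fin m → EuclideanSpace ℝ (Fin 2))
    (hcpt : ∀ i, IsCompact (P i))
    -- the centers are not all collinear:
    (hnc : ¬ ∃ L, IsLine L ∧ ∀ i, S i ∈ L) :
    ∃ c₀ : ℝ, 0 < c₀ ∧ ∀ c : ℝ, 0 < c → c < c₀ →
      ¬ ∃ t, IsLine t ∧ ∀ i, (t ∩ homothetyImage (S i) c (P i)).Nonempty := by
  have hspan : span ℝ (range fun p : Fin m × Fin m => S p.1 - S p.2) = ⊤ := by
    by_contra h
    rw [← vectorSpan_range_eq_span_range_sub] at h
    obtain ⟨L, hL, hSL⟩ := exists_isLine_superset_of_vectorSpan_ne_top h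
    exact hnc ⟨L, hL, fun i => hSL (mem_range_self i)⟩
  obtain ⟨K, hK0, hK⟩ := exists_opNorm_le_of_span_eq_top hspan
  obtain ⟨R, hR0, hR⟩ := exists_pos_forall_subset_closedBall (fun i => (hcpt i).isBounded) S
  refine ⟨1 / (2 * K * R), by positivity, ?_⟩
  rintro c hc hcc ⟨t, ⟨f, a, hf0, rfl⟩, ht⟩
  have hnear : ∀ i, |a - f (S i)| ≤ c * (‖f‖ * R) := fun i => by
    obtain ⟨y, hyt, hy⟩ := ht i
    rw [← hyt.out]
    exact abs_apply_sub_le_of_mem_homothetyImage f hc.le (hR i) hy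
  have hf : ‖f‖ ≤ K * (2 * (c * (‖f‖ * R))) := by
    refine hK f _ (by positivity) fun p => ?_
    have h₁ := abs_le.mp (hnear p.1)
    have h₂ := abs_le.mp (hnear p.2)
    rw [map_sub, abs_le]
    constructor <;> linarith
  have hsmall : 2 * K * R * c < 1 := by rwa [lt_div_iff₀' (by positivity)] at hcc
  have hfpos : 0 < ‖f‖ := norm_pos_iff.mpr hf0
  nlinarith

theorem no_transversal_for_small_ratio_of_noncollinear {m : ℕ}
    (P : Fin m → Set (EuclideanSpace ℝ (Fin 2)))
    (S : Fin m → EuclideanSpace ℝ (Fin 2))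
    (hcpt : ∀ i, IsCompact (P i)) (hconv : ∀ i, Convex ℝ (P i))
    (hS : ∀ i, S i ∈ interior (P i))
    -- the centers are not all collinear:
    (hnc : ¬ ∃ L, IsLine L ∧ ∀ i, S i ∈ L) :
    ∃ c₀ : ℝ, 0 < c₀ ∧ ∀ c : ℝ, 0 < c → c < c₀ →
      ¬ ∃ t, IsLine t ∧ ∀ i, (t ∩ homothetyImage (S i) c (P i)).Nonempty :=
  no_transversal_for_small_ratio_of_noncollinear_general P S hcpt hnc
end
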